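/- arXiv:2312.06698 — 5 statements merged into one kernel-verified Lean document; each statement's English description precedes it below -/
import Mathlib

section
/- A Ferrers board admits a domino tiling if and only if it is balanced, i.e., the number of its cells (i, j) with i + j even equals the number of its cells with i + j odd. -/
/-- Two cells of `ℕ × ℕ` are edge-adjacent: they differ by exactly 1 in one
coordinate and agree in the other. -/
abbrev CellAdj (a b : ℕ × ℕ) : Prop :=
  (a.1 = b.1 ∧ (a.2 + 1 = b.2 ∨ b.2 + 1 = a.2)) ∨
  (a.2 = b.2 ∧ (a.1 + 1 = b.1 ∨ b.1 + 1 = a.1))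

/-- `B` admits a domino tiling: a partition of `B` into two-element blocks of
edge-adjacent cells. -/
def Tileable (B : Finset (ℕ × ℕ)) : Prop :=
  ∃ T : Finset (Finset (ℕ × ℕ)),
    (∀ d ∈ T, ∃ a b, CellAdj a b ∧ d = {a, b}) ∧
    (T : Set (Finset (ℕ × ℕ))).PairwiseDisjoint id ∧
    T.sup id = B

/-- `B` is balanced: the number of cells `(i, j)` with `i + j` even equals the
number of cells with `i + j` odd. -/
def IsBalanced (B : Finset (ℕ × ℕ)) : Prop :=
  (B.filter fun c => (c.1 + c.2) % 2 = 0).card =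
  (B.filter fun c => (c.1 + c.2) % 2 = 1).card

lemma adj_colors {a b : ℕ × ℕ} (h : CellAdj a b) :
    ((a.1 + a.2) % 2 = 0 ∧ (b.1 + b.2) % 2 = 1) ∨
    ((a.1 + a.2) % 2 = 1 ∧ (b.1 + b.2) % 2 = 0) := by
  rcases h with ⟨h1, h2 | h2⟩ | ⟨h1, h2 | h2⟩ <;> omega

lemma adj_ne {a b : ℕ × ℕ} (h : CellAdj a b) : a ≠ b := by
  intro he
  rcases adj_colors h with ⟨h1, h2⟩ | ⟨h1, h2⟩ <;> rw [he] at h1 <;> omega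

lemma adj_filter_card {a b : ℕ × ℕ} (h : CellAdj a b) (k : ℕ) (hk : k < 2) :
    (({a, b} : Finset (ℕ × ℕ)).filter fun c => (c.1 + c.2) % 2 = k).card = 1 := by
  have hne := adj_ne h
  rcases adj_colors h with ⟨h1, h2⟩ | ⟨h1, h2⟩ <;>
    interval_cases k <;>
    simp [Finset.filter_insert, Finset.filter_singleton, h1, h2, hne]

lemma tileable_balanced {B : Finset (ℕ × ℕ)} (h : Tileable B) : IsBalanced B := by
  obtain ⟨T, hT, hdisj, hsup⟩ := h
  have hB : B = T.biUnion id := by rw [← hsup, Finset.sup_eq_biUnion]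
  have hcard : ∀ k : ℕ, k < 2 →
      (B.filter fun c => (c.1 + c.2) % 2 = k).card =
        ∑ d ∈ T, (d.filter fun c => (c.1 + c.2) % 2 = k).card := by
    intro k hk
    rw [hB, Finset.filter_biUnion]
    exact Finset.card_biUnion fun x hx y hy hxy =>
      Finset.disjoint_filter_filter (hdisj hx hy hxy)
  unfold IsBalanced
  rw [hcard 0 (by norm_num), hcard 1 (by norm_num)]
  refine Finset.sum_congr rfl fun d hd => ?_
  obtain ⟨a, b, hab, rfl⟩ := hT d hd
  rw [adj_filter_card hab 0 (by norm_num), adj_filter_card hab 1 (by norm_num)]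

lemma tileable_insert {B : Finset (ℕ × ℕ)} {a b : ℕ × ℕ} (ha : a ∈ B) (hb : b ∈ B)
    (hadj : CellAdj a b) (ht : Tileable (B \ {a, b})) : Tileable B := by
  obtain ⟨T, hT, hdisj, hsup⟩ := ht
  refine ⟨insert {a, b} T, ?_, ?_, ?_⟩
  · intro d hd
    rcases Finset.mem_insert.1 hd with rfl | hd
    · exact ⟨a, b, hadj, rfl⟩
    · exact hT d hd
  · rw [Finset.coe_insert]
    refine hdisj.insert fun e he hne => ?_
    have hsub : e ⊆ B \ {a, b} := hsup ▸ Finset.le_sup (f := id) he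
    exact Finset.disjoint_left.2 fun x hx hxe => (Finset.mem_sdiff.1 (hsub hxe)).2 hx
  · rw [Finset.sup_insert, hsup, Finset.sup_eq_union]
    apply Finset.union_sdiff_of_subset
    intro x hx
    rcases Finset.mem_insert.1 hx with rfl | hx
    · exact ha
    · rwa [Finset.mem_singleton.1 hx]

lemma filter_card_aux {B : Finset (ℕ × ℕ)} {a b : ℕ × ℕ} (ha : a ∈ B) (hne : a ≠ b)
    (k : ℕ) (hpa : (a.1 + a.2) % 2 = k) (hpb : (b.1 + b.2) % 2 ≠ k) :
    (B.filter fun c => (c.1 + c.2) % 2 = k).card =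
      ((B \ {a, b}).filter fun c => (c.1 + c.2) % 2 = k).card + 1 := by
  have heq : (B.filter fun c => (c.1 + c.2) % 2 = k) =
      insert a ((B \ {a, b}).filter fun c => (c.1 + c.2) % 2 = k) := by
    ext c
    simp only [Finset.mem_filter, Finset.mem_insert, Finset.mem_sdiff, Finset.mem_singleton]
    constructor
    · rintro ⟨hc, hck⟩
      by_cases hca : c = a
      · exact Or.inl hca
      · refine Or.inr ⟨⟨hc, ?_⟩, hck⟩
        rintro (rfl | rfl)
        · exact hca rfl
        · exact hpb hck
    · rintro (rfl | ⟨⟨hc, _⟩, hck⟩)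
      · exact ⟨ha, hpa⟩
      · exact ⟨hc, hck⟩
  rw [heq, Finset.card_insert_of_notMem]
  simp [hne]

lemma balanced_sdiff {B : Finset (ℕ × ℕ)} {a b : ℕ × ℕ} (ha : a ∈ B) (hb : b ∈ B)
    (hadj : CellAdj a b) (hbal : IsBalanced B) : IsBalanced (B \ {a, b}) := by
  have hne := adj_ne hadj
  unfold IsBalanced at *
  rcases adj_colors hadj with ⟨h1, h2⟩ | ⟨h1, h2⟩
  · rw [filter_card_aux ha hne 0 h1 (by omega), filter_card_aux hb hne.symm 1 h2 (by omega),
      Finset.pair_comm b a] at hbal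
    omega
  · rw [filter_card_aux hb hne.symm 0 h2 (by omega), filter_card_aux ha hne 1 h1 (by omega),
      Finset.pair_comm b a] at hbal
    omega

def stair (n : ℕ) : Finset (ℕ × ℕ) :=
  (Finset.range n ×ˢ Finset.range n).filter fun c => c.1 + c.2 < n

lemma mem_stair {n : ℕ} {c : ℕ × ℕ} : c ∈ stair n ↔ c.1 + c.2 < n := by
  simp only [stair, Finset.mem_filter, Finset.mem_product, Finset.mem_range]
  omega

lemma stair_succ (n : ℕ) :
    stair (n + 1) = stair n ∪ (Finset.range (n + 1)).image fun i => (i, n - i) := by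
  ext ⟨i, j⟩
  simp only [mem_stair, Finset.mem_union, Finset.mem_image, Finset.mem_range, Prod.mk.injEq]
  constructor
  · intro h
    rcases lt_or_ge (i + j) n with h' | h'
    · exact Or.inl h'
    · exact Or.inr ⟨i, by omega, rfl, by omega⟩
  · rintro (h | ⟨a, ha, rfl, rfl⟩) <;> omega

lemma stair_filter_card (n : ℕ) (k : ℕ) (hk : k < 2) :
    ((stair n).filter fun c => (c.1 + c.2) % 2 = k).card =
      if k = 0 then ((n + 1) / 2) ^ 2 else (n / 2) * ((n + 2) / 2) := by
  induction n with
  | zero => simp [stair]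
  | succ n ih =>
    have hdisj : Disjoint ((stair n).filter fun c => (c.1 + c.2) % 2 = k)
        (((Finset.range (n + 1)).image fun i => (i, n - i)).filter
          fun c => (c.1 + c.2) % 2 = k) := by
      rw [Finset.disjoint_left]
      intro c hc hc'
      obtain ⟨hc1, -⟩ := Finset.mem_filter.1 hc
      obtain ⟨hc2, -⟩ := Finset.mem_filter.1 hc'
      obtain ⟨a, ha, rfl⟩ := Finset.mem_image.1 hc2
      have := mem_stair.1 hc1
      simp only [Finset.mem_range] at ha
      simp at this
      omega
    have hinj : Function.Injective (fun i : ℕ => (i, n - i)) := by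
      intro x y hxy
      exact congrArg Prod.fst hxy
    have hcardimg : (((Finset.range (n + 1)).image fun i => (i, n - i)).filter
        fun c => (c.1 + c.2) % 2 = k).card = if n % 2 = k then n + 1 else 0 := by
      by_cases hnk : n % 2 = k
      · rw [Finset.filter_true_of_mem, Finset.card_image_of_injective _ hinj,
          Finset.card_range, if_pos hnk]
        intro c hc
        obtain ⟨a, ha, rfl⟩ := Finset.mem_image.1 hc
        simp only [Finset.mem_range] at ha
        simp only []
        omega
      · rw [Finset.filter_false_of_mem, Finset.card_empty, if_neg hnk]
        intro c hc
        obtain ⟨a, ha, rfl⟩ := Finset.mem_image.1 hc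
        simp only [Finset.mem_range] at ha
        simp only []
        omega
    rw [stair_succ, Finset.filter_union, Finset.card_union_of_disjoint hdisj, ih, hcardimg]
    have hz : ((0:ℕ) = 0) := rfl
    have ho : ¬((1:ℕ) = 0) := by decide
    interval_cases k
    · rcases Nat.even_or_odd n with ⟨m, rfl⟩ | ⟨m, rfl⟩
      · have e1 : (m + m + 1 + 1) / 2 = m + 1 := by omega
        have e2 : (m + m + 1) / 2 = m := by omega
        have e3 : (m + m) % 2 = 0 := by omega
        rw [if_pos hz, if_pos hz, if_pos e3, e1, e2]
        ring
      · have e1 : (2 * m + 1 + 1 + 1) / 2 = m + 1 := by omega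
        have e2 : (2 * m + 1 + 1) / 2 = m + 1 := by omega
        have e3 : ¬ ((2 * m + 1) % 2 = 0) := by omega
        rw [if_pos hz, if_pos hz, if_neg e3, e1, e2]
        ring
    · rcases Nat.even_or_odd n with ⟨m, rfl⟩ | ⟨m, rfl⟩
      · have e1 : (m + m) / 2 = m := by omega
        have e2 : (m + m + 2) / 2 = m + 1 := by omega
        have e3 : (m + m + 1) / 2 = m := by omega
        have e4 : (m + m + 1 + 2) / 2 = m + 1 := by omega
        have e5 : ¬ ((m + m) % 2 = 1) := by omega
        rw [if_neg ho, if_neg ho, if_neg e5, e1, e2, e3, e4]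
        ring
      · have e1 : (2 * m + 1) / 2 = m := by omega
        have e2 : (2 * m + 1 + 2) / 2 = m + 1 := by omega
        have e3 : (2 * m + 1 + 1) / 2 = m + 1 := by omega
        have e4 : (2 * m + 1 + 1 + 2) / 2 = m + 2 := by omega
        have e5 : (2 * m + 1) % 2 = 1 := by omega
        rw [if_neg ho, if_neg ho, if_pos e5, e1, e2, e3, e4]
        ring

lemma stair_balanced_eq_zero {n : ℕ} (h : IsBalanced (stair n)) : n = 0 := by
  unfold IsBalanced at h
  rw [stair_filter_card n 0 (by norm_num), stair_filter_card n 1 (by norm_num),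
    if_pos rfl, if_neg (by decide : ¬((1:ℕ) = 0))] at h
  rcases Nat.even_or_odd n with ⟨m, rfl⟩ | ⟨m, rfl⟩
  · have e1 : (m + m + 1) / 2 = m := by omega
    have e2 : (m + m) / 2 = m := by omega
    have e3 : (m + m + 2) / 2 = m + 1 := by omega
    rw [e1, e2, e3, sq] at h
    rcases Nat.eq_zero_or_pos m with rfl | hm
    · rfl
    · exact absurd (Nat.eq_of_mul_eq_mul_left hm h) (by omega)
  · have e1 : (2 * m + 1 + 1) / 2 = m + 1 := by omega
    have e2 : (2 * m + 1) / 2 = m := by omega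
    have e3 : (2 * m + 1 + 2) / 2 = m + 1 := by omega
    rw [e1, e2, e3, sq] at h
    have := Nat.eq_of_mul_eq_mul_right (by omega : 0 < m + 1) h
    omega

lemma ferrH {B : Finset (ℕ × ℕ)}
    (hlower : ∀ i j i' j', (i, j) ∈ B → i' ≤ i → j' ≤ j → (i', j') ∈ B)
    {i j : ℕ} (h1 : (i, j + 1) ∈ B) (h2 : (i, j + 2) ∉ B) (h3 : (i + 1, j) ∉ B) :
    ∀ a b a' b', (a, b) ∈ B \ {(i, j), (i, j + 1)} → a' ≤ a → b' ≤ b →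
      (a', b') ∈ B \ {(i, j), (i, j + 1)} := by
  intro a b a' b' hab ha hb
  simp only [Finset.mem_sdiff, Finset.mem_insert, Finset.mem_singleton, Prod.mk.injEq] at hab ⊢
  obtain ⟨habB, hno⟩ := hab
  refine ⟨hlower a b a' b' habB ha hb, ?_⟩
  rintro (⟨h4, h5⟩ | ⟨h4, h5⟩) <;> by_cases hai : a = i
  · have hbj : ¬(b = j) ∧ ¬(b = j + 1) := by tauto
    exact h2 (hlower a b i (j + 2) habB (by omega) (by omega))
  · exact h3 (hlower a b (i + 1) j habB (by omega) (by omega))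
  · have hbj : ¬(b = j) ∧ ¬(b = j + 1) := by tauto
    exact h2 (hlower a b i (j + 2) habB (by omega) (by omega))
  · exact h3 (hlower a b (i + 1) j habB (by omega) (by omega))

lemma ferrV {B : Finset (ℕ × ℕ)}
    (hlower : ∀ i j i' j', (i, j) ∈ B → i' ≤ i → j' ≤ j → (i', j') ∈ B)
    {i j : ℕ} (h1 : (i + 1, j) ∈ B) (h2 : (i, j + 1) ∉ B) (h3 : (i + 2, j) ∉ B) :
    ∀ a b a' b', (a, b) ∈ B \ {(i, j), (i + 1, j)} → a' ≤ a → b' ≤ b →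
      (a', b') ∈ B \ {(i, j), (i + 1, j)} := by
  intro a b a' b' hab ha hb
  simp only [Finset.mem_sdiff, Finset.mem_insert, Finset.mem_singleton, Prod.mk.injEq] at hab ⊢
  obtain ⟨habB, hno⟩ := hab
  refine ⟨hlower a b a' b' habB ha hb, ?_⟩
  rintro (⟨h4, h5⟩ | ⟨h4, h5⟩) <;> by_cases hbj : b = j
  · have hai : ¬(a = i) ∧ ¬(a = i + 1) := by tauto
    exact h3 (hlower a b (i + 2) j habB (by omega) (by omega))
  · exact h2 (hlower a b i (j + 1) habB (by omega) (by omega))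
  · have hai : ¬(a = i) ∧ ¬(a = i + 1) := by tauto
    exact h3 (hlower a b (i + 2) j habB (by omega) (by omega))
  · exact h2 (hlower a b i (j + 1) habB (by omega) (by omega))

lemma staircase_of_norem {B : Finset (ℕ × ℕ)}
    (hlower : ∀ i j i' j', (i, j) ∈ B → i' ≤ i → j' ≤ j → (i', j') ∈ B)
    (HH : ∀ i j, (i, j + 1) ∈ B → (i, j + 2) ∉ B → (i + 1, j) ∈ B)
    (HV : ∀ i j, (i + 1, j) ∈ B → (i, j + 1) ∉ B → (i + 2, j) ∈ B) :
    ∃ n, B = stair n := by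
  classical
  have hfin : ∀ i : ℕ, ∃ j, (i, j) ∉ B := by
    intro i
    refine ⟨B.sup Prod.snd + 1, fun hm => ?_⟩
    have := Finset.le_sup (f := Prod.snd) hm
    simp only [] at this
    omega
  let L : ℕ → ℕ := fun i => Nat.find (hfin i)
  have hmemL : ∀ i j, ((i, j) ∈ B ↔ j < L i) := by
    intro i j
    constructor
    · intro h
      by_contra hlt
      exact Nat.find_spec (hfin i) (hlower i j i (L i) h le_rfl (by omega))
    · intro h
      exact not_not.1 (Nat.find_min (hfin i) h)
  have hmono : ∀ i, L (i + 1) ≤ L i := by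
    intro i
    by_contra hlt
    have h1 : (i + 1, L i) ∈ B := (hmemL _ _).2 (by omega)
    exact Nat.find_spec (hfin i) (hlower (i + 1) (L i) i (L i) h1 (by omega) le_rfl)
  have hanti : ∀ a b : ℕ, a ≤ b → L b ≤ L a := by
    intro a b hab
    induction b with
    | zero =>
      have : a = 0 := by omega
      simp [this]
    | succ b ih =>
      rcases Nat.eq_or_lt_of_le hab with heq | h
      · rw [heq]
      · exact le_trans (hmono b) (ih (by omega))
  have hVfalse : ∀ i, 0 < L i → L (i + 1) = L i → False := by
    intro i hpos heq
    have hall : ∀ k, L (i + 1 + k) = L i := by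
      intro k
      induction k with
      | zero => simpa using heq
      | succ k ih =>
        have ihe : L (i + k + 1) = L i := by
          rw [show i + k + 1 = i + 1 + k by omega]
          exact ih
        have hb1 : (i + k + 1, L i - 1) ∈ B := (hmemL _ _).2 (by omega)
        have hb2 : (i + k, (L i - 1) + 1) ∉ B := by
          intro h
          have h' := (hmemL _ _).1 h
          have := hanti i (i + k) (by omega)
          omega
        have h3 := (hmemL _ _).1 (HV (i + k) (L i - 1) hb1 hb2)
        have h4 := hanti i (i + k + 2) (by omega)
        rw [show i + 1 + (k + 1) = i + k + 2 by omega]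
        omega
    have hin : (i + 1 + B.sup Prod.fst, 0) ∈ B :=
      (hmemL _ _).2 (by have := hall (B.sup Prod.fst); omega)
    have := Finset.le_sup (f := Prod.fst) hin
    simp only [] at this
    omega
  have hstep : ∀ i, L (i + 1) = L i - 1 := by
    intro i
    have hm := hmono i
    rcases Nat.lt_or_ge (L i) 2 with h2 | h2
    · rcases Nat.eq_zero_or_pos (L i) with h0 | h1
      · omega
      · rcases Nat.lt_or_ge (L (i + 1)) (L i) with h | h
        · omega
        · exfalso; exact hVfalse i h1 (by omega)
    · have hb1 : (i, (L i - 2) + 1) ∈ B := (hmemL _ _).2 (by omega)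
      have hb2 : (i, (L i - 2) + 2) ∉ B := by
        intro h
        have := (hmemL _ _).1 h
        omega
      have h3 := (hmemL _ _).1 (HH i (L i - 2) hb1 hb2)
      rcases Nat.lt_or_ge (L (i + 1)) (L i) with h | h
      · omega
      · exfalso; exact hVfalse i (by omega) (by omega)
  have hlin : ∀ i, L i = L 0 - i := by
    intro i
    induction i with
    | zero => omega
    | succ i ih =>
      have := hstep i
      omega
  refine ⟨L 0, ?_⟩
  ext ⟨i, j⟩
  rw [hmemL, mem_stair]
  have := hlin i
  simp only []
  omega

lemma tileable_empty : Tileable (∅ : Finset (ℕ × ℕ)) := by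
  refine ⟨∅, by simp, by simp, by simp⟩

lemma balanced_tileable :
    ∀ (N : ℕ) (B : Finset (ℕ × ℕ)), B.card ≤ N →
      (∀ i j i' j', (i, j) ∈ B → i' ≤ i → j' ≤ j → (i', j') ∈ B) →
      IsBalanced B → Tileable B := by
  intro N
  induction N with
  | zero =>
    intro B hcard _ _
    have : B = ∅ := Finset.card_eq_zero.1 (by omega)
    rw [this]
    exact tileable_empty
  | succ N ih =>
    intro B hcard hlower hbal
    rcases B.eq_empty_or_nonempty with rfl | hne
    · exact tileable_empty
    by_cases hrem : ∃ i j : ℕ,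
        ((i, j + 1) ∈ B ∧ (i, j + 2) ∉ B ∧ (i + 1, j) ∉ B) ∨
        ((i + 1, j) ∈ B ∧ (i, j + 1) ∉ B ∧ (i + 2, j) ∉ B)
    · obtain ⟨i, j, hc⟩ := hrem
      rcases hc with ⟨h1, h2, h3⟩ | ⟨h1, h2, h3⟩
      · -- horizontal domino {(i,j),(i,j+1)}
        have ha : (i, j) ∈ B := hlower i (j + 1) i j h1 le_rfl (by omega)
        have hadj : CellAdj (i, j) (i, j + 1) := Or.inl ⟨rfl, Or.inl rfl⟩
        have hsubset : ({(i, j), (i, j + 1)} : Finset (ℕ × ℕ)) ⊆ B := by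
          intro x hx
          rcases Finset.mem_insert.1 hx with rfl | hx
          · exact ha
          · rwa [Finset.mem_singleton.1 hx]
        have hcard2 : ({(i, j), (i, j + 1)} : Finset (ℕ × ℕ)).card = 2 := by
          rw [Finset.card_insert_of_notMem (by simp), Finset.card_singleton]
        have hcard' : (B \ {(i, j), (i, j + 1)}).card ≤ N := by
          rw [Finset.card_sdiff_of_subset hsubset, hcard2]
          have := Finset.card_le_card hsubset
          omega
        have hlower' := ferrH hlower h1 h2 h3
        exact tileable_insert ha h1 hadj
          (ih _ hcard' (fun a b a' b' => hlower' a b a' b') (balanced_sdiff ha h1 hadj hbal))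
      · -- vertical domino {(i,j),(i+1,j)}
        have ha : (i, j) ∈ B := hlower (i + 1) j i j h1 (by omega) le_rfl
        have hadj : CellAdj (i, j) (i + 1, j) := Or.inr ⟨rfl, Or.inl rfl⟩
        have hsubset : ({(i, j), (i + 1, j)} : Finset (ℕ × ℕ)) ⊆ B := by
          intro x hx
          rcases Finset.mem_insert.1 hx with rfl | hx
          · exact ha
          · rwa [Finset.mem_singleton.1 hx]
        have hcard2 : ({(i, j), (i + 1, j)} : Finset (ℕ × ℕ)).card = 2 := by
          rw [Finset.card_insert_of_notMem (by simp), Finset.card_singleton]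
        have hcard' : (B \ {(i, j), (i + 1, j)}).card ≤ N := by
          rw [Finset.card_sdiff_of_subset hsubset, hcard2]
          have := Finset.card_le_card hsubset
          omega
        have hlower' := ferrV hlower h1 h2 h3
        exact tileable_insert ha h1 hadj
          (ih _ hcard' (fun a b a' b' => hlower' a b a' b') (balanced_sdiff ha h1 hadj hbal))
    · push_neg at hrem
      have HH : ∀ i j, (i, j + 1) ∈ B → (i, j + 2) ∉ B → (i + 1, j) ∈ B :=
        fun i j h1 h2 => (hrem i j).1 h1 h2
      have HV : ∀ i j, (i + 1, j) ∈ B → (i, j + 1) ∉ B → (i + 2, j) ∈ B :=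
        fun i j h1 h2 => (hrem i j).2 h1 h2
      obtain ⟨n, rfl⟩ := staircase_of_norem hlower HH HV
      have := stair_balanced_eq_zero hbal
      subst this
      exact absurd hne (by simp [stair])

/-- A Ferrers board (finite lower set of cells in `ℕ × ℕ`) admits a domino
tiling if and only if it is balanced. -/
theorem ferrers_tileable_iff_balanced (B : Finset (ℕ × ℕ))
    (hlower : ∀ i j i' j', (i, j) ∈ B → i' ≤ i → j' ≤ j → (i', j') ∈ B) :
    Tileable B ↔ IsBalanced B := by
  constructor
  · exact tileable_balanced
  · exact balanced_tileable B.card B le_rfl hlower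
end

section
/- Every balanced Ferrers board admits a domino tiling: if the number of cells (i, j) of a Young diagram with i + j even equals the number of cells with i + j odd, then the diagram can be tiled by dominoes. -/
open Finset

/-! Auxiliary definitions -/

def rowLen (B : Finset (ℕ × ℕ)) (i : ℕ) : ℕ := (B.filter fun c => c.1 = i).card

lemma mem_iff_rowLen (B : Finset (ℕ × ℕ))
    (hlower : ∀ i j i' j', (i, j) ∈ B → i' ≤ i → j' ≤ j → (i', j') ∈ B) (i j : ℕ) :
    (i, j) ∈ B ↔ j < rowLen B i := by
  constructor
  · intro h
    have hsub : (Finset.range (j+1)).image (fun j' => (i, j')) ⊆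
        B.filter fun c => c.1 = i := by
      intro x hx
      simp only [mem_image, mem_range] at hx
      obtain ⟨j', hj', rfl⟩ := hx
      simp only [mem_filter]
      exact ⟨hlower i j i j' h le_rfl (by omega), by simp⟩
    have hinj : Function.Injective (fun j' => ((i, j') : ℕ × ℕ)) := by
      intro a b hab; simpa using hab
    have := Finset.card_le_card hsub
    rw [Finset.card_image_of_injective _ hinj, Finset.card_range] at this
    rw [rowLen]
    omega
  · intro h
    by_contra hmem
    have hsub : (B.filter fun c => c.1 = i) ⊆
        (Finset.range j).image (fun j' => (i, j')) := by
      rintro ⟨x, y⟩ hx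
      simp only [mem_filter] at hx
      obtain ⟨hxB, rfl⟩ := hx
      simp only [mem_image, mem_range]
      refine ⟨y, ?_, rfl⟩
      by_contra hy
      exact hmem (hlower x y x j hxB le_rfl (by omega))
    have hinj : Function.Injective (fun j' => ((i, j') : ℕ × ℕ)) := by
      intro a b hab; simpa using hab
    have := Finset.card_le_card hsub
    rw [Finset.card_image_of_injective _ hinj, Finset.card_range] at this
    rw [rowLen] at h
    omega

lemma rowLen_antitone (B : Finset (ℕ × ℕ))
    (hlower : ∀ i j i' j', (i, j) ∈ B → i' ≤ i → j' ≤ j → (i', j') ∈ B)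
    {m n : ℕ} (h : m ≤ n) : rowLen B n ≤ rowLen B m := by
  by_contra hc
  push_neg at hc
  have : (m, rowLen B m) ∈ B :=
    hlower n (rowLen B m) m (rowLen B m)
      ((mem_iff_rowLen B hlower n _).2 hc) h le_rfl
  have := (mem_iff_rowLen B hlower m _).1 this
  omega

lemma exists_rowLen_zero (B : Finset (ℕ × ℕ))
    (hlower : ∀ i j i' j', (i, j) ∈ B → i' ≤ i → j' ≤ j → (i', j') ∈ B) :
    ∃ n, rowLen B n = 0 := by
  by_contra hc
  push_neg at hc
  have hsub : (Finset.range (B.card + 1)).image (fun i => ((i, 0) : ℕ × ℕ)) ⊆ B := by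
    intro x hx
    simp only [mem_image, mem_range] at hx
    obtain ⟨i, _, rfl⟩ := hx
    exact (mem_iff_rowLen B hlower i 0).2 (by have := hc i; omega)
  have hinj : Function.Injective (fun i => ((i, 0) : ℕ × ℕ)) := by
    intro a b hab; simpa using hab
  have := Finset.card_le_card hsub
  rw [Finset.card_image_of_injective _ hinj, Finset.card_range] at this
  omega

def Stair (k : ℕ) : Finset (ℕ × ℕ) :=
  (Finset.range k ×ˢ Finset.range k).filter fun c => c.1 + c.2 < k

lemma mem_Stair {k i j : ℕ} : (i, j) ∈ Stair k ↔ i + j < k := by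
  simp only [Stair, mem_filter, mem_product, mem_range]
  omega

def Diag (k : ℕ) : Finset (ℕ × ℕ) := (Finset.range (k+1)).image fun i => (i, k - i)

lemma mem_Diag {k i j : ℕ} : (i, j) ∈ Diag k ↔ i + j = k := by
  simp only [Diag, mem_image, mem_range, Prod.mk.injEq]
  constructor
  · rintro ⟨a, ha, rfl, rfl⟩; omega
  · intro h; exact ⟨i, by omega, rfl, by omega⟩

lemma Stair_succ (k : ℕ) : Stair (k+1) = Stair k ∪ Diag k := by
  ext ⟨i, j⟩
  simp only [mem_Stair, mem_union, mem_Diag]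
  omega

lemma Diag_card (k : ℕ) : (Diag k).card = k + 1 := by
  rw [Diag, Finset.card_image_of_injective, Finset.card_range]
  intro a b hab
  exact congrArg Prod.fst hab

lemma Diag_filter (k r : ℕ) :
    ((Diag k).filter fun c => (c.1 + c.2) % 2 = r).card = if k % 2 = r then k + 1 else 0 := by
  split
  · next h =>
    rw [Finset.filter_true_of_mem, Diag_card]
    rintro ⟨i, j⟩ hij
    rw [mem_Diag] at hij
    simpa [hij] using h
  · next h =>
    rw [Finset.filter_false_of_mem, Finset.card_empty]
    rintro ⟨i, j⟩ hij
    rw [mem_Diag] at hij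
    simp only
    omega

lemma stair_disc (k : ℕ) :
    (((Stair k).filter fun c => (c.1 + c.2) % 2 = 0).card : ℤ) -
    (((Stair k).filter fun c => (c.1 + c.2) % 2 = 1).card : ℤ) =
    (-1) ^ (k + 1) * ((k + 1) / 2 : ℕ) := by
  induction k with
  | zero => simp [Stair]
  | succ k ih =>
    have hdis : Disjoint (Stair k) (Diag k) := by
      rw [Finset.disjoint_left]
      rintro ⟨i, j⟩ h1 h2
      rw [mem_Stair] at h1
      rw [mem_Diag] at h2
      omega
    rw [Stair_succ, Finset.filter_union, Finset.filter_union,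
      Finset.card_union_of_disjoint (Finset.disjoint_filter_filter hdis),
      Finset.card_union_of_disjoint (Finset.disjoint_filter_filter hdis),
      Diag_filter, Diag_filter]
    rcases Nat.even_or_odd k with hk | hk
    · have h0 : k % 2 = 0 := Nat.even_iff.1 hk
      have h1 : (-1 : ℤ) ^ k = 1 := hk.neg_one_pow
      have h2 : (-1 : ℤ) ^ (k + 1) = -1 := (hk.add_one).neg_one_pow
      have h3 : (-1 : ℤ) ^ (k + 2) = 1 := by
        rw [pow_succ, pow_succ, h1]; ring
      rw [h2] at ih
      rw [h3]
      simp only [h0, if_pos rfl, if_neg (by omega : ¬ (0:ℕ) % 2 = 1)]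
      have harith : ((k + 2) / 2 : ℕ) = (k + 1) - (k + 1) / 2 := by omega
      have hle : ((k+1)/2 : ℕ) ≤ k + 1 := by omega
      rw [harith, Nat.cast_sub hle]
      simp only [if_true, Nat.cast_add, Nat.cast_one, Nat.cast_zero]
      linarith
    · have h0 : k % 2 = 1 := Nat.odd_iff.1 hk
      have h1 : (-1 : ℤ) ^ (k + 1) = 1 := (hk.add_one).neg_one_pow
      have h2 : (-1 : ℤ) ^ (k + 2) = -1 := by
        rw [pow_succ, h1]; ring
      rw [h1] at ih
      rw [h2]
      simp only [h0, if_neg (by omega : ¬ (1:ℕ) % 2 = 0), if_pos rfl]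
      have harith : ((k + 2) / 2 : ℕ) = (k + 1) - (k + 1) / 2 := by omega
      have hle : ((k+1)/2 : ℕ) ≤ k + 1 := by omega
      rw [harith, Nat.cast_sub hle]
      simp only [if_true, Nat.cast_add, Nat.cast_one, Nat.cast_zero]
      linarith

lemma stair_not_balanced {k : ℕ} (hk : 1 ≤ k) : ¬ IsBalanced (Stair k) := by
  intro h
  have hd := stair_disc k
  rw [IsBalanced] at h
  rw [h, sub_self] at hd
  have h2 : (1 : ℕ) ≤ (k + 1) / 2 := by omega
  rcases Nat.even_or_odd (k + 1) with hk1 | hk1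
  · rw [hk1.neg_one_pow] at hd
    have h4 : (((k+1)/2 : ℕ) : ℤ) = 0 := by linarith
    have : ((k+1)/2 : ℕ) = 0 := by exact_mod_cast h4
    omega
  · rw [hk1.neg_one_pow] at hd
    have h4 : (((k+1)/2 : ℕ) : ℤ) = 0 := by linarith
    have : ((k+1)/2 : ℕ) = 0 := by exact_mod_cast h4
    omega

lemma exists_removable (B : Finset (ℕ × ℕ))
    (hlower : ∀ i j i' j', (i, j) ∈ B → i' ≤ i → j' ≤ j → (i', j') ∈ B)
    (hbal : IsBalanced B) (hne : B.Nonempty) :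
    ∃ a b : ℕ × ℕ, a ∈ B ∧ b ∈ B ∧ a ≠ b ∧ CellAdj a b ∧
      (∀ i j i' j', (i, j) ∈ (B.erase a).erase b → i' ≤ i → j' ≤ j →
        (i', j') ∈ (B.erase a).erase b) := by
  set L := rowLen B with hL
  have hm : ∀ i j, (i, j) ∈ B ↔ j < L i := mem_iff_rowLen B hlower
  have hanti : ∀ {m n : ℕ}, m ≤ n → L n ≤ L m := fun h => rowLen_antitone B hlower h
  by_cases hc1 : ∃ i, L (i+1) + 2 ≤ L i
  · obtain ⟨i, hi⟩ := hc1
    refine ⟨(i, L i - 2), (i, L i - 1), (hm _ _).2 (by omega), (hm _ _).2 (by omega),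
      by simp; omega, Or.inl ⟨rfl, Or.inl (by simp; omega)⟩, ?_⟩
    intro x y x' y' hmem hx hy
    rw [mem_erase, mem_erase] at hmem ⊢
    obtain ⟨hb, ha, hB⟩ := hmem
    have hB' : (x', y') ∈ B := hlower x y x' y' hB hx hy
    have hyx : y < L x := (hm x y).1 hB
    have hbn : ¬(x = i ∧ y = L i - 1) := fun h => hb (by rw [h.1, h.2])
    have han : ¬(x = i ∧ y = L i - 2) := fun h => ha (by rw [h.1, h.2])
    refine ⟨?_, ?_, hB'⟩
    · intro he
      rw [Prod.mk.injEq] at he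
      obtain ⟨h1, h2⟩ := he
      rcases (by omega : x = i ∨ i + 1 ≤ x) with h3 | h3
      · have hLx : L x = L i := congrArg L h3
        omega
      · have h4 := hanti h3
        omega
    · intro he
      rw [Prod.mk.injEq] at he
      obtain ⟨h1, h2⟩ := he
      rcases (by omega : x = i ∨ i + 1 ≤ x) with h3 | h3
      · have hLx : L x = L i := congrArg L h3
        omega
      · have h4 := hanti h3
        omega
  · push_neg at hc1
    by_cases hc2 : ∃ i, L i = L (i+1) ∧ 1 ≤ L (i+1) ∧ L (i+2) < L (i+1)
    · obtain ⟨i, he, hpos, hlt2⟩ := hc2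
      refine ⟨(i, L (i+1) - 1), (i+1, L (i+1) - 1), (hm _ _).2 (by omega),
        (hm _ _).2 (by omega), by simp, Or.inr ⟨rfl, Or.inl rfl⟩, ?_⟩
      intro x y x' y' hmem hx hy
      rw [mem_erase, mem_erase] at hmem ⊢
      obtain ⟨hb, ha, hB⟩ := hmem
      have hB' : (x', y') ∈ B := hlower x y x' y' hB hx hy
      have hyx : y < L x := (hm x y).1 hB
      have hbn : ¬(x = i + 1 ∧ y = L (i+1) - 1) := fun h => hb (by rw [h.1, h.2])
      have han : ¬(x = i ∧ y = L (i+1) - 1) := fun h => ha (by rw [h.1, h.2])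
      refine ⟨?_, ?_, hB'⟩
      · intro heq
        rw [Prod.mk.injEq] at heq
        obtain ⟨h1, h2⟩ := heq
        rcases (by omega : x = i ∨ x = i + 1 ∨ i + 2 ≤ x) with h3 | h3 | h3
        · have hLx : L x = L i := congrArg L h3
          omega
        · have hLx : L x = L (i + 1) := congrArg L h3
          omega
        · have h4 := hanti h3
          omega
      · intro heq
        rw [Prod.mk.injEq] at heq
        obtain ⟨h1, h2⟩ := heq
        rcases (by omega : x = i ∨ x = i + 1 ∨ i + 2 ≤ x) with h3 | h3 | h3
        · have hLx : L x = L i := congrArg L h3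
          omega
        · have hLx : L x = L (i + 1) := congrArg L h3
          omega
        · have h4 := hanti h3
          omega
    · exfalso
      push_neg at hc2
      obtain ⟨N, hN⟩ := exists_rowLen_zero B hlower
      rw [← hL] at hN
      have hstep : ∀ i, 0 < L i → L (i+1) = L i - 1 := by
        intro i hpos
        have h1 := hanti (by omega : i ≤ i + 1)
        have h2 := hc1 i
        rcases (by omega : L (i+1) = L i - 1 ∨ L (i+1) = L i) with h | h
        · exact h
        · exfalso
          have hconst : ∀ d, L (i + d) = L i ∧ L (i + d + 1) = L i := by
            intro d
            induction d with
            | zero => exact ⟨rfl, by rw [h]⟩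
            | succ d ihd =>
              obtain ⟨h0, h1'⟩ := ihd
              have h3 := hc2 (i + d) (by rw [h0, h1']) (by omega)
              have h4 : L (i + d + 2) ≤ L (i + d + 1) := hanti (by omega)
              have h5 : L (i + d + 2) = L i := by omega
              exact ⟨h1', by
                have : i + (d + 1) + 1 = i + d + 2 := by omega
                rw [this, h5]⟩
          have h6 := (hconst N).1
          have h7 : L (i + N) ≤ L N := hanti (by omega)
          omega
      have hlin : ∀ i, L i = L 0 - i := by
        intro i
        induction i with
        | zero => simp
        | succ i ihi =>
          rcases Nat.eq_zero_or_pos (L i) with h | h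
          · have := hanti (by omega : i ≤ i + 1)
            omega
          · have := hstep i h
            omega
      obtain ⟨⟨i, j⟩, hij⟩ := hne
      have hj : j < L i := (hm i j).1 hij
      have hk : 1 ≤ L 0 := by have := hanti (Nat.zero_le i); omega
      have hBS : B = Stair (L 0) := by
        ext ⟨x, y⟩
        rw [hm, mem_Stair, hlin x]
        omega
      exact stair_not_balanced hk (hBS ▸ hbal)

lemma isBalanced_erase_pair {B : Finset (ℕ × ℕ)} {a b : ℕ × ℕ} (ha : a ∈ B) (hb : b ∈ B)
    (hadj : CellAdj a b) (hbal : IsBalanced B) :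
    IsBalanced ((B.erase a).erase b) := by
  have hpar : (a.1 + a.2) % 2 ≠ (b.1 + b.2) % 2 := by
    rcases hadj with ⟨h1, h2 | h2⟩ | ⟨h1, h2 | h2⟩ <;> omega
  rw [IsBalanced, Finset.filter_erase, Finset.filter_erase,
    Finset.filter_erase, Finset.filter_erase]
  rcases (by omega : (a.1 + a.2) % 2 = 0 ∧ (b.1 + b.2) % 2 = 1 ∨
      (a.1 + a.2) % 2 = 1 ∧ (b.1 + b.2) % 2 = 0) with ⟨ha0, hb1⟩ | ⟨ha1, hb0⟩
  · have hbn0 : b ∉ (B.filter fun c => (c.1 + c.2) % 2 = 0).erase a := by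
      simp only [mem_erase, mem_filter]
      omega
    have han1 : a ∉ (B.filter fun c => (c.1 + c.2) % 2 = 1) := by
      simp only [mem_filter]
      omega
    rw [Finset.erase_eq_of_notMem hbn0, Finset.erase_eq_of_notMem han1,
      Finset.card_erase_of_mem (Finset.mem_filter.2 ⟨ha, ha0⟩),
      Finset.card_erase_of_mem (Finset.mem_filter.2 ⟨hb, hb1⟩), hbal]
  · have hbn1 : b ∉ (B.filter fun c => (c.1 + c.2) % 2 = 1).erase a := by
      simp only [mem_erase, mem_filter]
      omega
    have han0 : a ∉ (B.filter fun c => (c.1 + c.2) % 2 = 0) := by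
      simp only [mem_filter]
      omega
    rw [Finset.erase_eq_of_notMem hbn1, Finset.erase_eq_of_notMem han0,
      Finset.card_erase_of_mem (Finset.mem_filter.2 ⟨ha, ha1⟩),
      Finset.card_erase_of_mem (Finset.mem_filter.2 ⟨hb, hb0⟩), hbal]


/-- Every balanced Ferrers board (finite lower set of cells in `ℕ × ℕ` with
equally many cells of each checkerboard color) admits a domino tiling. -/
theorem balanced_ferrers_tileable (B : Finset (ℕ × ℕ))
    (hlower : ∀ i j i' j', (i, j) ∈ B → i' ≤ i → j' ≤ j → (i', j') ∈ B)
    (hbal : IsBalanced B) :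
    Tileable B := by
  have H : ∀ (n : ℕ) (B : Finset (ℕ × ℕ)), B.card ≤ n →
      (∀ i j i' j', (i, j) ∈ B → i' ≤ i → j' ≤ j → (i', j') ∈ B) →
      IsBalanced B → Tileable B := by
    intro n
    induction n with
    | zero =>
      intro B hcard _ _
      rw [Nat.le_zero, Finset.card_eq_zero] at hcard
      subst hcard
      exact ⟨∅, by simp, by simp, Finset.sup_empty⟩
    | succ n ih =>
      intro B hcard hlower hbal
      rcases B.eq_empty_or_nonempty with rfl | hne
      · exact ⟨∅, by simp, by simp, Finset.sup_empty⟩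
      · obtain ⟨a, b, ha, hb, hab, hadj, hlow'⟩ := exists_removable B hlower hbal hne
        set B' := (B.erase a).erase b with hB'
        have hbal' : IsBalanced B' := isBalanced_erase_pair ha hb hadj hbal
        have hbB : b ∈ B.erase a := Finset.mem_erase.2 ⟨fun h => hab h.symm, hb⟩
        have hcard' : B'.card ≤ n := by
          have h1 := Finset.card_erase_of_mem hbB
          have h2 := Finset.card_erase_of_mem ha
          have h3 : 1 ≤ B.card := Finset.card_pos.2 hne
          rw [hB', h1, h2]
          omega
        obtain ⟨T', hform, hdis, hsup⟩ := ih B' hcard' hlow' hbal'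
        have haB' : a ∉ B' := fun h => by
          have := Finset.mem_of_mem_erase h
          exact (Finset.mem_erase.1 this).1 rfl
        have hbB' : b ∉ B' := fun h => (Finset.mem_erase.1 h).1 rfl
        refine ⟨insert {a, b} T', ?_, ?_, ?_⟩
        · intro d hd
          rcases Finset.mem_insert.1 hd with rfl | hd'
          · exact ⟨a, b, hadj, rfl⟩
          · exact hform d hd'
        · rw [Finset.coe_insert]
          refine Set.PairwiseDisjoint.insert hdis ?_
          intro d hd _
          rw [Finset.disjoint_left]
          intro x hx hxd
          have hdsub : d ⊆ B' := by
            rw [← hsup]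
            exact Finset.le_sup (f := id) hd
          have hxB' : x ∈ B' := hdsub hxd
          rcases Finset.mem_insert.1 hx with rfl | hx'
          · exact haB' hxB'
          · rw [Finset.mem_singleton] at hx'
            subst hx'
            exact hbB' hxB'
        · ext x
          simp only [Finset.mem_sup, id_eq]
          constructor
          · rintro ⟨d, hd, hxd⟩
            rcases Finset.mem_insert.1 hd with rfl | hd'
            · rcases Finset.mem_insert.1 hxd with rfl | hxb
              · exact ha
              · rw [Finset.mem_singleton] at hxb
                subst hxb
                exact hb
            · have hdsub : d ⊆ B' := by
                rw [← hsup]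
                exact Finset.le_sup (f := id) hd'
              exact Finset.mem_of_mem_erase (Finset.mem_of_mem_erase (hdsub hxd))
          · intro hxB
            by_cases hxa : x = a
            · exact ⟨{a, b}, Finset.mem_insert_self _ _, by simp [hxa]⟩
            · by_cases hxb : x = b
              · exact ⟨{a, b}, Finset.mem_insert_self _ _, by simp [hxb]⟩
              · have hxB' : x ∈ B' :=
                  Finset.mem_erase.2 ⟨hxb, Finset.mem_erase.2 ⟨hxa, hxB⟩⟩
                rw [← hsup] at hxB'
                obtain ⟨d, hd, hxd⟩ := Finset.mem_sup.1 hxB'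
                exact ⟨d, Finset.mem_insert_of_mem hd, hxd⟩
  exact H B.card B le_rfl hlower hbal
end

section
/- A staircase Ferrers board cannot be tiled by dominoes: for any integers k ≥ 2 and m ≥ k, the Ferrers board of the partition (m, m−1, …, m−k+1), in which each part differs from the previous one by exactly 1, admits no domino tiling. -/
/-- The Ferrers board of a partition with `k` parts `lam 1 ≥ ⋯ ≥ lam k`:
the cells `(i, j)` with `1 ≤ i ≤ k` and `1 ≤ j ≤ lam i`. -/
def ferrersBoard (k : ℕ) (lam : ℕ → ℕ) : Finset (ℕ × ℕ) :=
  (Finset.Icc 1 k).biUnion fun i => (Finset.Icc 1 (lam i)).image fun j => (i, j)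

/-- The checkerboard sign of a cell. -/
def cellSgn (c : ℕ × ℕ) : ℤ := (-1) ^ (c.1 + c.2)

lemma adj_sgn {a b : ℕ × ℕ} (h : CellAdj a b) : cellSgn a + cellSgn b = 0 := by
  have h' : a.1 + a.2 + 1 = b.1 + b.2 ∨ b.1 + b.2 + 1 = a.1 + a.2 := by
    rcases h with ⟨h1, h2⟩ | ⟨h1, h2⟩ <;> omega
  unfold cellSgn
  rcases h' with h' | h' <;> rw [← h', pow_succ] <;> ring

lemma tile_sum {B : Finset (ℕ × ℕ)} (h : Tileable B) : ∑ c ∈ B, cellSgn c = 0 := by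
  obtain ⟨T, hdom, hdisj, hsup⟩ := h
  rw [← hsup, Finset.sup_eq_biUnion, Finset.sum_biUnion hdisj]
  apply Finset.sum_eq_zero
  intro d hd
  obtain ⟨a, b, hab, rfl⟩ := hdom d hd
  simp only [id_eq]
  rw [Finset.sum_pair (adj_ne hab)]
  exact adj_sgn hab

lemma alt_sum (L : ℕ) :
    ∑ j ∈ Finset.Icc 1 L, (-1 : ℤ) ^ j = if Even L then 0 else -1 := by
  induction L with
  | zero => simp
  | succ n ih =>
    rw [Finset.sum_Icc_succ_top (by omega), ih, pow_succ]
    rcases Nat.even_or_odd n with h | h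
    · simp [h, Nat.even_add_one, h.neg_one_pow]
    · simp [h, Nat.even_add_one, Nat.not_even_iff_odd.2 h, h.neg_one_pow]

lemma board_sum (k : ℕ) (lam : ℕ → ℕ) :
    ∑ c ∈ ferrersBoard k lam, cellSgn c =
      ∑ i ∈ Finset.Icc 1 k, (-1 : ℤ) ^ i * (if Even (lam i) then 0 else -1) := by
  unfold ferrersBoard
  rw [Finset.sum_biUnion]
  · apply Finset.sum_congr rfl
    intro i _
    rw [Finset.sum_image (by intro x _ y _ h; simpa using h)]
    rw [← alt_sum, Finset.mul_sum]
    apply Finset.sum_congr rfl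
    intro j _
    rw [cellSgn, ← pow_add]
  · intro i hi j hj hij
    simp only [Function.onFun]
    rw [Finset.disjoint_left]
    intro x hx hx'
    obtain ⟨a, _, rfl⟩ := Finset.mem_image.1 hx
    obtain ⟨b, _, hb⟩ := Finset.mem_image.1 hx'
    exact hij (by simpa using (Prod.mk.injEq .. ▸ hb).1.symm)

/-- A staircase Ferrers board, i.e. the board of the partition
`(m, m-1, …, m-k+1)` with `k ≥ 2` parts each differing from the previous one
by exactly 1, admits no domino tiling. -/
theorem staircase_not_tileable (k m : ℕ) (hk : 2 ≤ k) (hm : k ≤ m) :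
    ¬ Tileable (ferrersBoard k (fun i => m + 1 - i)) := by
  intro h
  have hz := tile_sum h
  rw [board_sum] at hz
  -- rewrite each term as (-1)^(m+1) * indicator
  have hterm : ∀ i ∈ Finset.Icc 1 k,
      (-1 : ℤ) ^ i * (if Even (m + 1 - i) then 0 else -1)
        = (-1 : ℤ) ^ (m + 1) * (if Even (m + 1 - i) then 0 else 1) := by
    intro i hi
    simp only [Finset.mem_Icc] at hi
    by_cases he : Even (m + 1 - i)
    · simp [he]
    · have hodd : Odd (m + 1 - i) := Nat.not_even_iff_odd.1 he
      have : (m + 1 : ℕ) = (m + 1 - i) + i := by omega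
      rw [this, pow_add, hodd.neg_one_pow]
      simp [he]
  rw [Finset.sum_congr rfl hterm, ← Finset.mul_sum] at hz
  have hne : ((-1 : ℤ) ^ (m + 1)) ≠ 0 := by
    rcases Nat.even_or_odd (m + 1) with h' | h' <;>
      simp [h'.neg_one_pow, Odd.neg_one_pow]
  have hS : ∑ i ∈ Finset.Icc 1 k, (if Even (m + 1 - i) then (0 : ℤ) else 1) = 0 := by
    rcases mul_eq_zero.1 hz with h' | h'
    · exact absurd h' hne
    · exact h'
  -- but some term is 1
  obtain ⟨i₀, hi₀mem, hi₀odd⟩ : ∃ i₀ ∈ Finset.Icc 1 k, ¬ Even (m + 1 - i₀) := by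
    rcases Nat.even_or_odd m with hme | hmo
    · exact ⟨2, Finset.mem_Icc.2 ⟨by omega, hk⟩, by
        rw [Nat.even_sub (by omega)]; simp [hme, Nat.even_add_one]⟩
    · exact ⟨1, Finset.mem_Icc.2 ⟨le_refl 1, by omega⟩, by
        rw [Nat.even_sub (by omega)]
        simp [Nat.even_add_one, Nat.not_even_iff_odd.2 hmo]⟩
  have hpos : (0 : ℤ) < ∑ i ∈ Finset.Icc 1 k, (if Even (m + 1 - i) then (0 : ℤ) else 1) := by
    have h1 : (1 : ℤ) ≤ ∑ i ∈ Finset.Icc 1 k, (if Even (m + 1 - i) then (0 : ℤ) else 1) := by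
      have := Finset.single_le_sum
        (f := fun i => if Even (m + 1 - i) then (0 : ℤ) else 1)
        (fun i _ => by positivity) hi₀mem
      simpa [hi₀odd] using this
    linarith
  omega
end

section
/- (Gomory's theorem) Let n ≥ 1 and m ≥ 2, and consider the 2n × m rectangular board {(i, j) : 1 ≤ i ≤ 2n, 1 ≤ j ≤ m} with the checkerboard coloring in which a cell (i, j) is black if i + j is even and white if i + j is odd. If one black cell b and one white cell w are removed from the board, the remaining set of cells still admits a domino tiling. -/
def gcell (n m k : ℕ) : ℕ × ℕ :=
  if k < 2*n then (2*n - k, 1)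
  else ((k - 2*n) / (m-1) + 1,
        if ((k - 2*n) / (m-1)) % 2 = 0 then 2 + (k - 2*n) % (m-1)
        else m - (k - 2*n) % (m-1))

lemma gcell_spec (n m k : ℕ) (hm : 2 ≤ m) (hk : 2*n ≤ k) :
    ∃ q s, k = 2*n + q*(m-1) + s ∧ s < m-1 ∧
      gcell n m k = (q+1, if q % 2 = 0 then 2+s else m-s) := by
  have hm1 : 0 < m - 1 := by omega
  refine ⟨(k-2*n)/(m-1), (k-2*n)%(m-1), ?_, Nat.mod_lt _ hm1, ?_⟩
  · have h := Nat.div_add_mod (k-2*n) (m-1)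
    rw [Nat.mul_comm] at h
    have h2 : k - 2*n + 2*n = k := by omega
    linarith
  · rw [gcell, if_neg (by omega)]

lemma rep_unique (m a s a' s' : ℕ) (hm : 2 ≤ m)
    (h : a*(m-1) + s = a'*(m-1) + s') (hs : s < m-1) (hs' : s' < m-1) :
    a = a' ∧ s = s' := by
  rcases lt_trichotomy a a' with h1|h1|h1
  · exfalso
    have h2 : (a+1)*(m-1) ≤ a'*(m-1) := Nat.mul_le_mul_right _ h1
    rw [add_mul, one_mul] at h2
    linarith
  · subst h1; constructor; rfl; linarith
  · exfalso
    have h2 : (a'+1)*(m-1) ≤ a*(m-1) := Nat.mul_le_mul_right _ h1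
    rw [add_mul, one_mul] at h2
    linarith

lemma gcell_mem (n m k : ℕ) (hn : 1 ≤ n) (hm : 2 ≤ m) (hk : k < 2*n*m) :
    gcell n m k ∈ Finset.Icc 1 (2*n) ×ˢ Finset.Icc 1 m := by
  rw [Finset.mem_product, Finset.mem_Icc, Finset.mem_Icc]
  by_cases h : k < 2*n
  · rw [gcell, if_pos h]
    constructor <;> constructor <;> simp <;> omega
  · obtain ⟨q, s, h1, h2, h3⟩ := gcell_spec n m k hm (by omega)
    rw [h3]
    have hq : q < 2*n := by
      by_contra hc
      have h4 : 2*n*(m-1) ≤ q*(m-1) := Nat.mul_le_mul_right _ (by omega)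
      have h5 : 2*n*(m-1) + 2*n = 2*n*m := by
        have : m - 1 + 1 = m := by omega
        calc 2*n*(m-1) + 2*n = 2*n*((m-1)+1) := by ring
        _ = 2*n*m := by rw [this]
      linarith
    rcases Nat.mod_two_eq_zero_or_one q with hq2|hq2 <;> simp only [hq2] <;> simp <;> omega

lemma gcell_parity (n m k : ℕ) (hm : 2 ≤ m) (hk : k < 2*n*m) :
    ((gcell n m k).1 + (gcell n m k).2) % 2 = (k+1) % 2 := by
  by_cases h : k < 2*n
  · rw [gcell, if_pos h]; simp; omega
  · obtain ⟨q, s, h1, h2, h3⟩ := gcell_spec n m k hm (by omega)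
    rw [h3]
    have hmm : q * (m-1) % 2 = q % 2 * ((m-1) % 2) % 2 := Nat.mul_mod q (m-1) 2
    set e := q * (m-1) with he
    rcases Nat.mod_two_eq_zero_or_one q with hq2|hq2 <;>
      rcases Nat.mod_two_eq_zero_or_one (m-1) with hm2|hm2 <;>
      rw [hq2, hm2] at hmm <;> simp only [hq2] <;> simp <;> omega

lemma gcell_inj (n m : ℕ) (hn : 1 ≤ n) (hm : 2 ≤ m) {j k : ℕ}
    (hj : j < 2*n*m) (hk : k < 2*n*m) (h : gcell n m j = gcell n m k) : j = k := by
  by_cases h1 : j < 2*n <;> by_cases h2 : k < 2*n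
  · rw [gcell, if_pos h1, gcell, if_pos h2, Prod.ext_iff] at h
    simp at h; omega
  · exfalso
    obtain ⟨q, s, hk1, hs, hg⟩ := gcell_spec n m k hm (by omega)
    rw [gcell, if_pos h1, hg, Prod.ext_iff] at h
    simp at h
    rcases Nat.mod_two_eq_zero_or_one q with hq2|hq2 <;> rw [hq2] at h <;> simp at h <;> omega
  · exfalso
    obtain ⟨q, s, hk1, hs, hg⟩ := gcell_spec n m j hm (by omega)
    rw [hg, gcell, if_pos h2, Prod.ext_iff] at h
    simp at h
    rcases Nat.mod_two_eq_zero_or_one q with hq2|hq2 <;> rw [hq2] at h <;> simp at h <;> omega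
  · obtain ⟨q, s, hj1, hs, hg⟩ := gcell_spec n m j hm (by omega)
    obtain ⟨q', s', hk1, hs', hg'⟩ := gcell_spec n m k hm (by omega)
    rw [hg, hg', Prod.ext_iff] at h
    simp at h
    obtain ⟨hqq, hcol⟩ := h
    subst hqq
    have hss : s = s' := by
      rcases Nat.mod_two_eq_zero_or_one q with hq2|hq2 <;> rw [hq2] at hcol <;> simp at hcol <;> omega
    subst hss
    set e := q * (m-1) with he
    omega

lemma gcell_adj (n m : ℕ) (hn : 1 ≤ n) (hm : 2 ≤ m) (k : ℕ) (hk : k < 2*n*m) :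
    CellAdj (gcell n m k) (gcell n m ((k+1) % (2*n*m))) := by
  have h2n : 2*n ≤ 2*n*m := by nlinarith
  have h2n2 : 2*n*2 ≤ 2*n*m := Nat.mul_le_mul_left _ hm
  by_cases hA : k + 1 < 2*n
  · rw [gcell, if_pos (by omega : k < 2*n), gcell]
    rw [Nat.mod_eq_of_lt (by omega), if_pos hA]
    exact Or.inr ⟨rfl, Or.inr (by simp; omega)⟩
  · by_cases hB : k + 1 = 2*n
    · rw [gcell, if_pos (by omega : k < 2*n)]
      rw [Nat.mod_eq_of_lt (by omega)]
      obtain ⟨q, s, h1, h2, h3⟩ := gcell_spec n m (k+1) hm (by omega)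
      have hee : ∃ e, q * (m-1) = e := ⟨_, rfl⟩
      obtain ⟨e, he⟩ := hee
      rw [he] at h1
      have he0 : e = 0 ∧ s = 0 := by omega
      have hq : q = 0 := by
        rcases Nat.mul_eq_zero.mp (he.trans he0.1) with h|h
        · exact h
        · omega
      rw [h3, hq, he0.2]
      have hk1 : 2*n - k = 1 := by omega
      rw [hk1]
      exact Or.inl ⟨by norm_num, Or.inl (by norm_num)⟩
    · by_cases hC : k + 1 < 2*n*m
      · rw [Nat.mod_eq_of_lt hC]
        obtain ⟨q, s, h1, h2, h3⟩ := gcell_spec n m k hm (by omega)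
        obtain ⟨q', s', h1', h2', h3'⟩ := gcell_spec n m (k+1) hm (by omega)
        rw [h3, h3']
        by_cases hs : s + 1 < m - 1
        · have heq : q*(m-1) + (s+1) = q'*(m-1) + s' := by linarith
          obtain ⟨hqq, hss⟩ := rep_unique m q (s+1) q' s' hm heq hs h2'
          subst hqq; subst hss
          refine Or.inl ⟨rfl, ?_⟩
          rcases Nat.mod_two_eq_zero_or_one q with hq2|hq2 <;> simp only [hq2] <;> simp <;> omega
        · have heq : (q+1)*(m-1) + 0 = q'*(m-1) + s' := by
            have hx : (q+1)*(m-1) = q*(m-1) + (m-1) := by ring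
            linarith
          obtain ⟨hqq, hss⟩ := rep_unique m (q+1) 0 q' s' hm heq (by omega) h2'
          subst hss
          rw [← hqq]
          refine Or.inr ⟨?_, Or.inl (by norm_num)⟩
          rcases Nat.mod_two_eq_zero_or_one q with hq2|hq2 <;>
            simp only [hq2] <;> simp [Nat.add_mod, hq2] <;> omega
      · have hk2 : (k + 1) % (2*n*m) = 0 := by
          rw [show k+1 = 2*n*m by omega, Nat.mod_self]
        obtain ⟨q, s, h1, h2, h3⟩ := gcell_spec n m k hm (by omega)
        have hg0 : gcell n m 0 = (2*n, 1) := by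
          rw [gcell, if_pos (by omega : (0:ℕ) < 2*n)]; simp
        have h4 : (2*n-1)*(m-1) + (m-2) + 2*n + 1 = 2*n*m := by
          obtain ⟨a, rfl⟩ : ∃ a, n = a + 1 := ⟨n-1, by omega⟩
          obtain ⟨c, rfl⟩ : ∃ c, m = c + 2 := ⟨m-2, by omega⟩
          have e1 : 2*(a+1) - 1 = 2*a+1 := by omega
          have e2 : c + 2 - 1 = c + 1 := by omega
          have e3 : c + 2 - 2 = c := by omega
          rw [e1, e2, e3]; ring
        have heq : q*(m-1) + s = (2*n-1)*(m-1) + (m-2) := by linarith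
        obtain ⟨hqq, hss⟩ := rep_unique m q s (2*n-1) (m-2) hm heq h2 (by omega)
        subst hqq
        rw [hk2, hg0, h3, hss, if_neg (by omega)]
        have hr : 2*n - 1 + 1 = 2*n := by omega
        have hc : m - (m-2) = 2 := by omega
        rw [hr, hc]
        exact Or.inl ⟨by norm_num, Or.inr (by norm_num)⟩

lemma gcell_surj (n m : ℕ) (hn : 1 ≤ n) (hm : 2 ≤ m) (x : ℕ × ℕ)
    (hx : x ∈ Finset.Icc 1 (2*n) ×ˢ Finset.Icc 1 m) :
    ∃ k, k < 2*n*m ∧ gcell n m k = x := by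
  have himg : (Finset.range (2*n*m)).image (gcell n m)
      = Finset.Icc 1 (2*n) ×ˢ Finset.Icc 1 m := by
    apply Finset.eq_of_subset_of_card_le
    · intro y hy
      rw [Finset.mem_image] at hy
      obtain ⟨k, hk, rfl⟩ := hy
      rw [Finset.mem_range] at hk
      exact gcell_mem n m k hn hm hk
    · rw [Finset.card_image_of_injOn, Finset.card_range, Finset.card_product,
        Nat.card_Icc, Nat.card_Icc]
      · simp
      · intro a ha b hb hab
        simp only [Finset.coe_range, Set.mem_Iio] at ha hb
        exact gcell_inj n m hn hm ha hb hab
  rw [← himg, Finset.mem_image] at hx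
  obtain ⟨k, hk, h⟩ := hx
  exact ⟨k, Finset.mem_range.mp hk, h⟩


/-- Gomory's theorem: removing one black cell (`i + j` even) and one white cell
(`i + j` odd) from a `2n × m` rectangular board leaves a set of cells that
still admits a domino tiling. -/
theorem gomory (n m : ℕ) (hn : 1 ≤ n) (hm : 2 ≤ m) (b w : ℕ × ℕ)
    (hb : b ∈ Finset.Icc 1 (2 * n) ×ˢ Finset.Icc 1 m)
    (hw : w ∈ Finset.Icc 1 (2 * n) ×ˢ Finset.Icc 1 m)
    (hbBlack : (b.1 + b.2) % 2 = 0) (hwWhite : (w.1 + w.2) % 2 = 1) :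
    Tileable (((Finset.Icc 1 (2 * n) ×ˢ Finset.Icc 1 m).erase b).erase w) := by
  classical
  have hN0 : 0 < 2*n*m := Nat.mul_pos (by omega) (by omega)
  have hNeven : (2*n*m) % 2 = 0 := by
    rw [mul_assoc]; exact Nat.mul_mod_right 2 (n*m)
  obtain ⟨p, hp, hpb⟩ := gcell_surj n m hn hm b hb
  obtain ⟨q, hq, hqw⟩ := gcell_surj n m hn hm w hw
  have hppar : (p+1) % 2 = 0 := by
    have := gcell_parity n m p hm hp
    rw [hpb] at this; omega
  have hqpar : (q+1) % 2 = 1 := by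
    have := gcell_parity n m q hm hq
    rw [hqw] at this; omega
  have hpq : p ≠ q := by omega
  obtain ⟨d, hd⟩ : ∃ d, d = if q < p then p - q else 2*n*m + p - q := ⟨_, rfl⟩
  have hd1 : 1 ≤ d := by rw [hd]; split_ifs <;> omega
  have hd2 : d ≤ 2*n*m - 1 := by rw [hd]; split_ifs <;> omega
  have hdodd : d % 2 = 1 := by rw [hd]; split_ifs <;> omega
  have hdp : (q + d) % (2*n*m) = p := by
    rw [hd]; split_ifs with h
    · rw [show q + (p - q) = p by omega]; exact Nat.mod_eq_of_lt hp
    · rw [show q + (2*n*m + p - q) = 2*n*m + p by omega, Nat.add_mod_left]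
      exact Nat.mod_eq_of_lt hp
  have keyinj : ∀ a c : ℕ, a < 2*n*m → c < 2*n*m →
      gcell n m ((q+a) % (2*n*m)) = gcell n m ((q+c) % (2*n*m)) → a = c := by
    intro a c ha hc hgac
    have h1 := gcell_inj n m hn hm (Nat.mod_lt _ hN0) (Nat.mod_lt _ hN0) hgac
    have h2 : a ≡ c [MOD 2*n*m] := Nat.ModEq.add_left_cancel' q h1
    rwa [Nat.ModEq, Nat.mod_eq_of_lt ha, Nat.mod_eq_of_lt hc] at h2
  have hbd : gcell n m ((q+d) % (2*n*m)) = b := by rw [hdp, hpb]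
  have hw0 : gcell n m ((q+0) % (2*n*m)) = w := by
    rw [Nat.add_zero, Nat.mod_eq_of_lt hq, hqw]
  refine ⟨((Finset.Ico 1 (2*n*m)).filter
      (fun t => (t < d ∧ t % 2 = 1) ∨ (d < t ∧ t % 2 = 0))).image
      (fun t => ({gcell n m ((q+t) % (2*n*m)), gcell n m ((q+t+1) % (2*n*m))}
        : Finset (ℕ×ℕ))), ?_, ?_, ?_⟩
  · intro dd hdd
    rw [Finset.mem_image] at hdd
    obtain ⟨t, ht, rfl⟩ := hdd
    refine ⟨_, _, ?_, rfl⟩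
    have h1 : (q+t) % (2*n*m) < 2*n*m := Nat.mod_lt _ hN0
    have h2 := gcell_adj n m hn hm _ h1
    rwa [Nat.mod_add_mod] at h2
  · intro x hx y hy hxy
    simp only [Finset.coe_image, Set.mem_image, Finset.mem_coe,
      Finset.mem_filter, Finset.mem_Ico] at hx hy
    obtain ⟨t, ht, rfl⟩ := hx
    obtain ⟨t', ht', rfl⟩ := hy
    have htt : t ≠ t' := fun h => hxy (by rw [h])
    obtain ⟨⟨ht1, ht2⟩, htc⟩ := ht
    obtain ⟨⟨ht1', ht2'⟩, htc'⟩ := ht'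
    have key : ∀ u v : ℕ, u ≤ 2*n*m - 1 → v ≤ 2*n*m - 1 → u ≠ v →
        gcell n m ((q+u) % (2*n*m)) ≠ gcell n m ((q+v) % (2*n*m)) := by
      intro u v hu2 hv2 huv hgeq
      exact huv (keyinj u v (by omega) (by omega) hgeq)
    simp only [Function.onFun, id_eq]
    rw [Finset.disjoint_left]
    intro z hz1 hz2
    simp only [Finset.mem_insert, Finset.mem_singleton] at hz1 hz2
    have hsep : t + 2 ≤ t' ∨ t' + 2 ≤ t := by
      rcases htc with h|h <;> rcases htc' with h'|h' <;> omega
    rcases hz1 with rfl|rfl <;> rcases hz2 with h|h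
    · exact key t t' (by omega) (by omega) (by omega) h
    · exact key t (t'+1) (by omega) (by omega) (by omega) h
    · exact key (t+1) t' (by omega) (by omega) (by omega) h
    · exact key (t+1) (t'+1) (by omega) (by omega) (by omega) h
  · apply Finset.ext
    intro x
    simp only [Finset.mem_sup, Finset.mem_image, Finset.mem_filter,
      Finset.mem_Ico, Finset.mem_erase, id]
    constructor
    · rintro ⟨dd, ⟨t, ⟨⟨ht1, ht2⟩, htc⟩, rfl⟩, hxdd⟩
      simp only [Finset.mem_insert, Finset.mem_singleton] at hxdd
      obtain ⟨u, hu1, hu2, hud, hxu⟩ : ∃ u, 1 ≤ u ∧ u ≤ 2*n*m - 1 ∧ u ≠ d ∧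
          x = gcell n m ((q+u) % (2*n*m)) := by
        rcases hxdd with rfl|rfl
        · exact ⟨t, by omega, by omega, by omega, rfl⟩
        · exact ⟨t+1, by omega, by omega, by omega, rfl⟩
      have hxmem : x ∈ Finset.Icc 1 (2*n) ×ˢ Finset.Icc 1 m :=
        hxu ▸ gcell_mem n m _ hn hm (Nat.mod_lt _ hN0)
      refine ⟨?_, ?_, hxmem⟩
      · intro hxw
        have : u = 0 := keyinj u 0 (by omega) (by omega)
          (by rw [← hxu, hw0]; exact hxw)
        omega
      · intro hxb
        have : u = d := keyinj u d (by omega) (by omega)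
          (by rw [← hxu, hbd]; exact hxb)
        omega
    · rintro ⟨hxw, hxb, hxB⟩
      obtain ⟨k, hk, hgk⟩ := gcell_surj n m hn hm x hxB
      obtain ⟨u, hu⟩ : ∃ u, u = if q ≤ k then k - q else 2*n*m + k - q := ⟨_, rfl⟩
      have huN : u ≤ 2*n*m - 1 := by rw [hu]; split_ifs <;> omega
      have hqu : (q + u) % (2*n*m) = k := by
        rw [hu]; split_ifs with h
        · rw [show q + (k - q) = k by omega]; exact Nat.mod_eq_of_lt hk
        · rw [show q + (2*n*m + k - q) = 2*n*m + k by omega, Nat.add_mod_left]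
          exact Nat.mod_eq_of_lt hk
      have hu0 : u ≠ 0 := by
        rintro rfl
        exact hxw (by rw [← hgk, ← hqu, hw0])
      have hud : u ≠ d := by
        rintro rfl
        exact hxb (by rw [← hgk, ← hqu, hbd])
      have hgx : gcell n m ((q+u) % (2*n*m)) = x := by rw [hqu, hgk]
      have hcases : (u % 2 = 1 ∧ u < d) ∨ (u % 2 = 0 ∧ u < d) ∨
          (u % 2 = 0 ∧ d < u) ∨ (u % 2 = 1 ∧ d < u) := by omega
      rcases hcases with ⟨hp1, hp2⟩|⟨hp1, hp2⟩|⟨hp1, hp2⟩|⟨hp1, hp2⟩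
      · refine ⟨_, ⟨u, ⟨⟨by omega, by omega⟩, Or.inl ⟨hp2, hp1⟩⟩, rfl⟩, ?_⟩
        simp only [Finset.mem_insert, Finset.mem_singleton]
        exact Or.inl hgx.symm
      · refine ⟨_, ⟨u-1, ⟨⟨by omega, by omega⟩, Or.inl ⟨by omega, by omega⟩⟩, rfl⟩, ?_⟩
        simp only [Finset.mem_insert, Finset.mem_singleton]
        right
        rw [show q + (u-1) + 1 = q + u by omega, hgx]
      · refine ⟨_, ⟨u, ⟨⟨by omega, by omega⟩, Or.inr ⟨hp2, hp1⟩⟩, rfl⟩, ?_⟩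
        simp only [Finset.mem_insert, Finset.mem_singleton]
        exact Or.inl hgx.symm
      · refine ⟨_, ⟨u-1, ⟨⟨by omega, by omega⟩, Or.inr ⟨by omega, by omega⟩⟩, rfl⟩, ?_⟩
        simp only [Finset.mem_insert, Finset.mem_singleton]
        right
        rw [show q + (u-1) + 1 = q + u by omega, hgx]
end

section
/- Let λ = (λ_1 ≥ λ_2 ≥ ⋯ ≥ λ_k) be a partition with k ≥ 3 rows such that: the Ferrers board of λ is balanced, the first row length λ_1 is odd, the number of rows k is odd, and the last part λ_k = 1. Then there exists an index r with 1 ≤ r < k such that the set of cells of the Ferrers board lying in the first r rows is balanced (and consequently the set of cells lying in the remaining rows r+1, …, k is balanced as well). -/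
open Finset

/-- Signed even-minus-odd count for the cells `(i,1),…,(i,n)` of a single row. -/
lemma FB.cnt_diff (i : ℕ) : ∀ n : ℕ,
    ((((Icc 1 n).filter fun j => (i + j) % 2 = 0).card : ℤ) -
      (((Icc 1 n).filter fun j => (i + j) % 2 = 1).card : ℤ)) =
    if n % 2 = 0 then 0 else if i % 2 = 0 then -1 else 1 := by
  intro n
  induction n with
  | zero => simp
  | succ n ih =>
    rw [← Finset.insert_Icc_right_eq_Icc_add_one (by omega), filter_insert, filter_insert]
    have hnm : (n+1) ∉ Icc 1 n := by simp
    by_cases h : (i + (n+1)) % 2 = 0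
    · rw [if_pos h, if_neg (by omega),
        card_insert_of_notMem (fun hx => hnm (mem_filter.mp hx).1)]
      push_cast
      rw [show ((((Icc 1 n).filter fun j => (i + j) % 2 = 0).card : ℤ) + 1 -
        ((Icc 1 n).filter fun j => (i + j) % 2 = 1).card) =
        ((((Icc 1 n).filter fun j => (i + j) % 2 = 0).card : ℤ) -
        ((Icc 1 n).filter fun j => (i + j) % 2 = 1).card) + 1 by ring, ih]
      split_ifs <;> omega
    · rw [if_neg h, if_pos (by omega),
        card_insert_of_notMem (fun hx => hnm (mem_filter.mp hx).1)]
      push_cast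
      rw [show ((((Icc 1 n).filter fun j => (i + j) % 2 = 0).card : ℤ) -
        (((Icc 1 n).filter fun j => (i + j) % 2 = 1).card + 1)) =
        ((((Icc 1 n).filter fun j => (i + j) % 2 = 0).card : ℤ) -
        ((Icc 1 n).filter fun j => (i + j) % 2 = 1).card) - 1 by ring, ih]
      split_ifs <;> omega

/-- Signed even-minus-odd count of the first `r` rows, as a sum of row terms. -/
lemma FB.board_diff (lam : ℕ → ℕ) : ∀ r : ℕ,
    (((ferrersBoard r lam).filter fun c => (c.1 + c.2) % 2 = 0).card : ℤ) -
      (((ferrersBoard r lam).filter fun c => (c.1 + c.2) % 2 = 1).card : ℤ) =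
    ∑ i ∈ Icc 1 r, (if lam i % 2 = 0 then (0:ℤ) else if i % 2 = 0 then -1 else 1) := by
  intro r
  induction r with
  | zero => simp [ferrersBoard]
  | succ r ih =>
    have hboard : ferrersBoard (r+1) lam =
        ((Icc 1 (lam (r+1))).image fun j => (r+1, j)) ∪ ferrersBoard r lam := by
      rw [ferrersBoard, ← Finset.insert_Icc_right_eq_Icc_add_one (by omega), biUnion_insert]
      rfl
    have hdisj : Disjoint ((Icc 1 (lam (r+1))).image fun j => (r+1, j))
        (ferrersBoard r lam) := by
      simp only [disjoint_left, mem_image, ferrersBoard, mem_biUnion, mem_Icc]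
      rintro c ⟨j, hj, rfl⟩ ⟨i, hi, j', hj', h⟩
      rw [Prod.mk.injEq] at h
      omega
    have hinj : Function.Injective (fun j : ℕ => ((r+1 : ℕ), j)) := by
      intro a b h; simpa using h
    have key : ∀ (m : ℕ), (((ferrersBoard (r+1) lam).filter
        fun c => (c.1 + c.2) % 2 = m).card : ℤ) =
        (((Icc 1 (lam (r+1))).filter fun j => ((r+1) + j) % 2 = m).card : ℤ) +
        (((ferrersBoard r lam).filter fun c => (c.1 + c.2) % 2 = m).card : ℤ) := by
      intro m
      rw [hboard, filter_union, card_union_of_disjoint (disjoint_filter_filter hdisj),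
        filter_image, card_image_of_injective _ hinj]
      push_cast; ring
    rw [key 0, key 1, Finset.sum_Icc_succ_top (by omega), ← ih]
    have h := FB.cnt_diff (r+1) (lam (r+1))
    linarith

/-- The cells of the board in the first `r` rows form the board of the truncation. -/
lemma FB.filter_le (k r : ℕ) (lam : ℕ → ℕ) (h : r ≤ k) :
    (ferrersBoard k lam).filter (fun c => c.1 ≤ r) = ferrersBoard r lam := by
  ext ⟨a, b⟩
  simp only [ferrersBoard, mem_filter, mem_biUnion, mem_image, mem_Icc, Prod.mk.injEq]
  constructor
  · rintro ⟨⟨i, hi, j, hj, rfl, rfl⟩, hr⟩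
    exact ⟨i, ⟨hi.1, by omega⟩, j, hj, rfl, rfl⟩
  · rintro ⟨i, hi, j, hj, rfl, rfl⟩
    exact ⟨⟨i, ⟨hi.1, by omega⟩, j, hj, rfl, rfl⟩, hi.2⟩

/-- Discrete intermediate value theorem for a ±1-step walk that is `1` at time `1`
and `-1` at time `k - 1`. -/
lemma FB.walk (S : ℕ → ℤ) (k : ℕ) (hk : 3 ≤ k) (hS1 : S 1 = 1) (hSk1 : S (k-1) = -1)
    (hstep : ∀ r, S r - 1 ≤ S (r+1) ∧ S (r+1) ≤ S r + 1) :
    ∃ r, 1 ≤ r ∧ r < k ∧ S r = 0 := by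
  classical
  have hP : ∃ r, 2 ≤ r ∧ S r ≤ 0 := ⟨k - 1, by omega, by omega⟩
  refine ⟨Nat.find hP, ?_, ?_, ?_⟩
  · have := (Nat.find_spec hP).1; omega
  · have := Nat.find_min' hP ⟨(by omega : 2 ≤ k - 1), by omega⟩; omega
  · obtain ⟨hr2, hSr⟩ := Nat.find_spec hP
    have hSprev : 1 ≤ S (Nat.find hP - 1) := by
      rcases eq_or_lt_of_le hr2 with h | h
      · rw [show Nat.find hP - 1 = 1 by omega, hS1]
      · have hmin := Nat.find_min hP (show Nat.find hP - 1 < Nat.find hP by omega)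
        push_neg at hmin
        have := hmin (by omega)
        omega
    have h1 := (hstep (Nat.find hP - 1)).1
    rw [show Nat.find hP - 1 + 1 = Nat.find hP by omega] at h1
    omega

/-- If a partition `lam 1 ≥ ⋯ ≥ lam k ≥ 1` with `k ≥ 3` rows has a balanced
Ferrers board, odd first row length `lam 1`, an odd number `k` of rows, and
last part `lam k = 1`, then there is an index `r` with `1 ≤ r < k` such that
the cells of the board lying in the first `r` rows form a balanced set (and
consequently the cells in the remaining rows form a balanced set as well). -/
theorem exists_balanced_split (k : ℕ) (lam : ℕ → ℕ) (hk : 3 ≤ k)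
    (hpos : ∀ i, 1 ≤ i → i ≤ k → 1 ≤ lam i)
    (hanti : ∀ i j, 1 ≤ i → i ≤ j → j ≤ k → lam j ≤ lam i)
    (hbal : IsBalanced (ferrersBoard k lam))
    (hodd1 : Odd (lam 1)) (hoddk : Odd k) (hlast : lam k = 1) :
    ∃ r, 1 ≤ r ∧ r < k ∧
      IsBalanced ((ferrersBoard k lam).filter fun c => c.1 ≤ r) ∧
      IsBalanced ((ferrersBoard k lam).filter fun c => r < c.1) := by
  classical
  set d : ℕ → ℤ := fun i => if lam i % 2 = 0 then (0:ℤ) else if i % 2 = 0 then -1 else 1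
    with hd
  have hb : ∀ r : ℕ,
      (((ferrersBoard r lam).filter fun c => (c.1 + c.2) % 2 = 0).card : ℤ) -
      (((ferrersBoard r lam).filter fun c => (c.1 + c.2) % 2 = 1).card : ℤ) =
      ∑ i ∈ Icc 1 r, d i := FB.board_diff lam
  set S : ℕ → ℤ := fun r => ∑ i ∈ Icc 1 r, d i with hS
  have hdbd : ∀ i, -1 ≤ d i ∧ d i ≤ 1 := by
    intro i; rw [hd]; dsimp only; split_ifs <;> omega
  have hstep : ∀ r : ℕ, S (r+1) = S r + d (r+1) := fun r =>
    Finset.sum_Icc_succ_top (by omega) d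
  have hSk : S k = 0 := by
    have h1 := hb k
    rw [IsBalanced] at hbal
    show (∑ i ∈ Icc 1 k, d i) = 0
    omega
  have hS1 : S 1 = 1 := by
    show (∑ i ∈ Icc 1 1, d i) = 1
    rw [show Icc 1 1 = {1} from rfl, Finset.sum_singleton, hd]
    obtain ⟨m, hm⟩ := hodd1
    simp only
    rw [if_neg (by omega), if_neg (by omega)]
  have hdk : d k = 1 := by
    obtain ⟨m, hm⟩ := hoddk
    rw [hd]; dsimp only
    rw [if_neg (by omega), if_neg (by omega)]
  have hSk1 : S (k-1) = -1 := by
    have h1 := hstep (k-1)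
    rw [show k - 1 + 1 = k by omega] at h1
    omega
  obtain ⟨r, hr1, hrk, hSr0⟩ := FB.walk S k hk hS1 hSk1 (by
    intro r
    have h1 := hstep r
    have h2 := hdbd (r+1)
    omega)
  refine ⟨r, hr1, hrk, ?_, ?_⟩
  · rw [FB.filter_le k r lam (by omega), IsBalanced]
    have h1 := hb r
    have hz : (∑ i ∈ Icc 1 r, d i) = 0 := hSr0
    omega
  · rw [IsBalanced]
    have hsplit : ∀ (m : ℕ),
        (((ferrersBoard k lam).filter fun c => c.1 ≤ r).filter
          fun c => (c.1 + c.2) % 2 = m).card +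
        (((ferrersBoard k lam).filter fun c => r < c.1).filter
          fun c => (c.1 + c.2) % 2 = m).card =
        ((ferrersBoard k lam).filter fun c => (c.1 + c.2) % 2 = m).card := by
      intro m
      rw [show ((ferrersBoard k lam).filter fun c => r < c.1) =
          ((ferrersBoard k lam).filter fun c => ¬ c.1 ≤ r) from
          filter_congr (fun x _ => by simp)]
      have e1 : (((ferrersBoard k lam).filter fun c => c.1 ≤ r).filter
          fun c => (c.1 + c.2) % 2 = m) =
          (((ferrersBoard k lam).filter fun c => (c.1 + c.2) % 2 = m).filter
          fun c => c.1 ≤ r) := filter_comm _ _ _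
      have e2 : (((ferrersBoard k lam).filter fun c => ¬ c.1 ≤ r).filter
          fun c => (c.1 + c.2) % 2 = m) =
          (((ferrersBoard k lam).filter fun c => (c.1 + c.2) % 2 = m).filter
          fun c => ¬ c.1 ≤ r) := filter_comm _ _ _
      rw [e1, e2]
      exact Finset.card_filter_add_card_filter_not _
    have h0 := hsplit 0
    have h1 := hsplit 1
    have hfirst : (((ferrersBoard k lam).filter fun c => c.1 ≤ r).filter
        fun c => (c.1 + c.2) % 2 = 0).card =
        (((ferrersBoard k lam).filter fun c => c.1 ≤ r).filter
        fun c => (c.1 + c.2) % 2 = 1).card := by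
      rw [FB.filter_le k r lam (by omega)]
      have hbr := hb r
      have hz : (∑ i ∈ Icc 1 r, d i) = 0 := hSr0
      omega
    rw [IsBalanced] at hbal
    omega
end
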